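/- Suppose k = 2 and let γ ≥ 1. For a profile s ∈ [2]^n and agent i, let s⊕i be the profile obtained by flipping agent i's signal. Define the constrained agents C(s) = {i ∈ [n] : (s_i, (s⊕i)_i) ∈ σ_i(s_{-i})}, the acceptable agents A_γ(s) = {i ∈ [n] : ρ_i(s) ≥ 1/γ}, and the must-match profiles M_γ = {s ∈ [2]^n : A_γ(s) ⊆ C(s)}. Let G_γ be the undirected graph on vertex set [2]^n with an edge between s and s⊕i whenever s ∈ M_γ, (s_i, (s⊕i)_i) ∈ σ_i(s_{-i}), and i ∈ A_γ(s) ∩ A_γ(s⊕i). Then there exists a deterministic allocation rule x ∈ T_D(σ) with R(ρ,x) ≤ γ if and only if G_γ contains a matching (a set of pairwise vertex-disjoint edges) of cardinality |M_γ|. -/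

import Mathlib

/-!
A deterministic rule is a winner function `W`; its ratio is at most `γ` iff every `W s` is
acceptable at `s`, and for binary signals it is truthful iff `W (s ⊕ W s) = W s` whenever
`W s` is constrained at `s`. At a must-match profile the winner is constrained, so
`s ↦ {s, s ⊕ W s}` is a matching of `G_γ` of size `|M_γ|`; the truthfulness of `W` makes these
edges disjoint. Conversely every edge has a must-match endpoint, so a matching of size `|M_γ|`
covers `M_γ`; give each matched profile to the agent of its edge and each unmatched profile,
which is not must-match, to an acceptable unconstrained agent.
-/

namespace Stmt11

variable {n : ℕ}

/-- Induced performance ratio. -/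
noncomputable def rho [NeZero n] (v : Fin n → (Fin n → Fin 2) → ℝ) (i : Fin n)
    (s : Fin n → Fin 2) : ℝ :=
  v i s / Finset.univ.sup' Finset.univ_nonempty (fun j => v j s)

/-- The profile `s ⊕ i` obtained by flipping agent `i`'s (binary) signal. -/
def flipAt (s : Fin n → Fin 2) (i : Fin n) : Fin n → Fin 2 :=
  Function.update s i (s i + 1)

/-- `i` is constrained at `s`: `(s_i, (s⊕i)_i) ∈ σ_i(s_{-i})`. -/
def Constrained (v : Fin n → (Fin n → Fin 2) → ℝ) (s : Fin n → Fin 2) (i : Fin n) : Prop :=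
  v i s < v i (flipAt s i)

/-- `i` is acceptable at `s` for ratio `γ`. -/
def Acceptable [NeZero n] (v : Fin n → (Fin n → Fin 2) → ℝ) (γ : ℝ)
    (s : Fin n → Fin 2) (i : Fin n) : Prop :=
  1 / γ ≤ rho v i s

/-- `s` is a must-match profile: all acceptable agents are constrained. -/
def MustMatch [NeZero n] (v : Fin n → (Fin n → Fin 2) → ℝ) (γ : ℝ)
    (s : Fin n → Fin 2) : Prop :=
  ∀ i, Acceptable v γ s i → Constrained v s i

/-- Directed version of the edge condition of `G_γ`, going out of the must-match profile. -/
def EdgeCond [NeZero n] (v : Fin n → (Fin n → Fin 2) → ℝ) (γ : ℝ)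
    (s s' : Fin n → Fin 2) : Prop :=
  ∃ i, s' = flipAt s i ∧ MustMatch v γ s ∧ v i s < v i s' ∧
    Acceptable v γ s i ∧ Acceptable v γ s' i

/-- Membership in the truthful polytope `T(σ)` for the orderings induced by `v`. -/
def InT (v x : Fin n → (Fin n → Fin 2) → ℝ) : Prop :=
  (∀ i s, 0 ≤ x i s ∧ x i s ≤ 1) ∧ (∀ s, ∑ i, x i s = 1) ∧
  (∀ (i : Fin n) (s : Fin n → Fin 2) (a b : Fin 2),
    v i (Function.update s i a) < v i (Function.update s i b) →
    x i (Function.update s i a) ≤ x i (Function.update s i b))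

lemma flipAt_flipAt (s : Fin n → Fin 2) (i : Fin n) : flipAt (flipAt s i) i = s := by
  have hi : ∀ a : Fin 2, a + 1 + 1 = a := by decide
  simp [flipAt, hi]

lemma flipAt_left_injective (i : Fin n) : Function.Injective (flipAt · i) :=
  Function.LeftInverse.injective (g := (flipAt · i)) fun s => flipAt_flipAt s i

lemma flipAt_right_injective (s : Fin n → Fin 2) : Function.Injective (flipAt s) := by
  intro i j h
  by_contra hij
  have hi := congrFun h i
  have hne : ∀ a : Fin 2, a + 1 ≠ a := by decide
  simp [flipAt, Function.update_of_ne hij, hne] at hi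

lemma flipAt_update_of_ne (s : Fin n → Fin 2) (i : Fin n) {a b : Fin 2} (h : a ≠ b) :
    flipAt (Function.update s i a) i = Function.update s i b := by
  obtain rfl : b = a + 1 := by revert a b; decide
  simp [flipAt]

def VertexDisjoint {α : Type*} (F : Finset (α × α)) : Prop :=
  ∀ p ∈ F, ∀ q ∈ F, p ≠ q → p.1 ≠ q.1 ∧ p.1 ≠ q.2 ∧ p.2 ≠ q.1 ∧ p.2 ≠ q.2

namespace VertexDisjoint

variable {α : Type*} {F : Finset (α × α)}

lemma eq_of_mem (hF : VertexDisjoint F) {p q : α × α} (hp : p ∈ F) (hq : q ∈ F) {a : α}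
    (hap : a = p.1 ∨ a = p.2) (haq : a = q.1 ∨ a = q.2) : p = q := by
  by_contra hpq
  obtain ⟨h11, h12, h21, h22⟩ := hF p hp q hq hpq
  rcases hap with rfl | rfl <;> rcases haq with h | h <;> contradiction

lemma partner_unique (hF : VertexDisjoint F) {t u u' : α} (hu : (t, u) ∈ F ∨ (u, t) ∈ F)
    (hu' : (t, u') ∈ F ∨ (u', t) ∈ F) : u = u' := by
  rcases hu with hu | hu <;> rcases hu' with hu' | hu' <;>
    grind [hF.eq_of_mem hu hu' (a := t) (by simp) (by simp)]

/-- Every edge has an endpoint in `S`, so an injective choice of such endpoints fills `S`. -/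
lemma exists_partner_of_card_le (hF : VertexDisjoint F) {S : Finset α}
    (hS : ∀ p ∈ F, p.1 ∈ S ∨ p.2 ∈ S) (hcard : S.card ≤ F.card) {s : α} (hs : s ∈ S) :
    ∃ u, (s, u) ∈ F ∨ (u, s) ∈ F := by
  classical
  let endpoint : α × α → α := fun p => if p.1 ∈ S then p.1 else p.2
  have hendpoint : ∀ p, endpoint p = p.1 ∨ endpoint p = p.2 := fun p => by
    unfold endpoint; split_ifs <;> simp
  have hmaps : Set.MapsTo endpoint F S := fun p hp => by
    unfold endpoint; split_ifs with h
    exacts [h, (hS p hp).resolve_left h]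
  have hinj : Set.InjOn endpoint F := fun p hp q hq hpq =>
    hF.eq_of_mem hp hq (hendpoint p) (hpq ▸ hendpoint q)
  obtain ⟨p, hp, rfl⟩ := Finset.surjOn_of_injOn_of_card_le endpoint hmaps hinj hcard hs
  rcases hendpoint p with h | h <;> rw [h]
  exacts [⟨p.2, Or.inl hp⟩, ⟨p.1, Or.inr hp⟩]

end VertexDisjoint

/-- For binary signals the orderings `σ_i` only compare a profile with its flip at `i`. -/
lemma inT_iff (v x : Fin n → (Fin n → Fin 2) → ℝ) :
    InT v x ↔ (∀ i s, 0 ≤ x i s ∧ x i s ≤ 1) ∧ (∀ s, ∑ i, x i s = 1) ∧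
      ∀ i s, Constrained v s i → x i s ≤ x i (flipAt s i) := by
  refine and_congr_right' (and_congr_right' ⟨fun h i s hs => ?_, fun h i s a b hab => ?_⟩)
  · have := h i s (s i) (s i + 1)
    rw [Function.update_eq_self] at this
    exact this hs
  · have hab' : a ≠ b := by rintro rfl; exact lt_irrefl _ hab
    rw [← flipAt_update_of_ne s i hab'] at hab ⊢
    exact h i _ hab

def winnerRule (W : (Fin n → Fin 2) → Fin n) : Fin n → (Fin n → Fin 2) → ℝ :=
  fun i s => if i = W s then 1 else 0

lemma exists_eq_winnerRule {x : Fin n → (Fin n → Fin 2) → ℝ} (hsum : ∀ s, ∑ i, x i s = 1)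
    (hdet : ∀ i s, x i s = 0 ∨ x i s = 1) : ∃ W, x = winnerRule W := by
  have hwinner : ∀ s, ∃ w, ∀ i, x i s = if i = w then 1 else 0 := by
    intro s
    obtain ⟨w, -, hw⟩ := Finset.exists_ne_zero_of_sum_ne_zero ((hsum s).symm ▸ one_ne_zero)
    have hw1 : x w s = 1 := (hdet w s).resolve_left hw
    refine ⟨w, fun i => ?_⟩
    split_ifs with hi
    · rwa [hi]
    · have hnonneg : ∀ j ∈ Finset.univ, 0 ≤ x j s := fun j _ => by
        rcases hdet j s with h | h <;> simp [h]
      have hle := Finset.add_le_sum hnonneg (Finset.mem_univ w) (Finset.mem_univ i) (Ne.symm hi)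
      rw [hsum s, hw1] at hle
      exact (hdet i s).resolve_right fun h => by linarith
  choose W hW using hwinner
  exact ⟨W, funext fun i => funext fun s => hW s i⟩

lemma inT_winnerRule_iff (v : Fin n → (Fin n → Fin 2) → ℝ) (W : (Fin n → Fin 2) → Fin n) :
    InT v (winnerRule W) ↔ ∀ s, Constrained v s (W s) → W (flipAt s (W s)) = W s := by
  rw [inT_iff]
  constructor
  · rintro ⟨-, -, h⟩ s hs
    have hle := h (W s) s hs
    simp only [winnerRule, if_true] at hle
    split_ifs at hle with hflip
    · exact hflip.symm
    · norm_num at hle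
  · intro h
    refine ⟨fun i s => ?_, fun s => by simp [winnerRule], fun i s hs => ?_⟩ <;>
      unfold winnerRule
    · split_ifs <;> norm_num
    · split_ifs with hi hflip <;> try norm_num
      subst hi
      exact hflip (h s hs).symm

section

variable [NeZero n] {v : Fin n → (Fin n → Fin 2) → ℝ} {γ : ℝ}

lemma rho_pos (hv : ∀ i s, 0 < v i s) (i : Fin n) (s : Fin n → Fin 2) : 0 < rho v i s :=
  div_pos (hv i s) ((hv i s).trans_le (Finset.le_sup' (fun j => v j s) (Finset.mem_univ i)))

lemma winnerRule_ratio_le_iff (hv : ∀ i s, 0 < v i s) (hγ : 0 < γ) (W : (Fin n → Fin 2) → Fin n) :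
    Finset.univ.sup' Finset.univ_nonempty
        (fun s : Fin n → Fin 2 => ∑ i, winnerRule W i s / rho v i s) ≤ γ ↔
      ∀ s, Acceptable v γ s (W s) := by
  simp only [Finset.sup'_le_iff, Finset.mem_univ, true_implies, winnerRule, ite_div, one_div,
    zero_div, Finset.sum_ite_eq', if_true, Acceptable]
  exact forall_congr' fun s => by rw [← one_div, ← one_div, one_div_le hγ (rho_pos hv _ s)]

structure IsAdmissibleWinner (v : Fin n → (Fin n → Fin 2) → ℝ) (γ : ℝ)
    (W : (Fin n → Fin 2) → Fin n) : Prop where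
  acceptable : ∀ s, Acceptable v γ s (W s)
  flipAt_eq : ∀ s, Constrained v s (W s) → W (flipAt s (W s)) = W s

theorem exists_deterministic_iff_exists_isAdmissibleWinner (hv : ∀ i s, 0 < v i s)
    (hγ : 0 < γ) :
    (∃ x : Fin n → (Fin n → Fin 2) → ℝ, InT v x ∧ (∀ i s, x i s = 0 ∨ x i s = 1) ∧
      Finset.univ.sup' Finset.univ_nonempty
        (fun s : Fin n → Fin 2 => ∑ i, x i s / rho v i s) ≤ γ) ↔
    ∃ W, IsAdmissibleWinner v γ W := by
  constructor
  · rintro ⟨x, hx, hdet, hratio⟩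
    obtain ⟨W, rfl⟩ := exists_eq_winnerRule hx.2.1 hdet
    exact ⟨W, (winnerRule_ratio_le_iff hv hγ W).1 hratio, (inT_winnerRule_iff v W).1 hx⟩
  · rintro ⟨W, hacc, hflip⟩
    refine ⟨winnerRule W, (inT_winnerRule_iff v W).2 hflip, fun i s => ?_,
      (winnerRule_ratio_le_iff hv hγ W).2 hacc⟩
    unfold winnerRule
    split_ifs <;> simp

namespace IsAdmissibleWinner

variable {W : (Fin n → Fin 2) → Fin n} (hW : IsAdmissibleWinner v γ W) {s t : Fin n → Fin 2}
include hW

lemma constrained (hs : MustMatch v γ s) : Constrained v s (W s) :=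
  hs _ (hW.acceptable s)

lemma flipAt_eq_of_mustMatch (hs : MustMatch v γ s) : W (flipAt s (W s)) = W s :=
  hW.flipAt_eq s (hW.constrained hs)

lemma edgeCond (hs : MustMatch v γ s) : EdgeCond v γ s (flipAt s (W s)) :=
  ⟨W s, rfl, hs, hW.constrained hs, hW.acceptable s,
    by simpa only [hW.flipAt_eq_of_mustMatch hs] using hW.acceptable (flipAt s (W s))⟩

lemma ne_flipAt (hs : MustMatch v γ s) (ht : MustMatch v γ t) : s ≠ flipAt t (W t) := by
  rintro rfl
  have hback := hW.constrained hs
  rw [Constrained, hW.flipAt_eq_of_mustMatch ht, flipAt_flipAt] at hback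
  exact lt_asymm hback (hW.constrained ht)

lemma flipAt_inj (hs : MustMatch v γ s) (ht : MustMatch v γ t)
    (h : flipAt s (W s) = flipAt t (W t)) : s = t := by
  have hWst : W s = W t := by
    rw [← hW.flipAt_eq_of_mustMatch hs, h, hW.flipAt_eq_of_mustMatch ht]
  rw [hWst] at h
  exact flipAt_left_injective _ h

lemma exists_matching : ∃ F : Finset ((Fin n → Fin 2) × (Fin n → Fin 2)),
    (∀ p ∈ F, EdgeCond v γ p.1 p.2 ∨ EdgeCond v γ p.2 p.1) ∧ VertexDisjoint F ∧
      F.card = {s : Fin n → Fin 2 | MustMatch v γ s}.ncard := by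
  classical
  refine ⟨(Finset.univ.filter (MustMatch v γ)).image fun s => (s, flipAt s (W s)), ?_, ?_, ?_⟩
  · simp only [Finset.mem_image, Finset.mem_filter, Finset.mem_univ, true_and,
      forall_exists_index, and_imp]
    rintro _ s hs rfl
    exact Or.inl (hW.edgeCond hs)
  · simp only [VertexDisjoint, Finset.mem_image, Finset.mem_filter, Finset.mem_univ, true_and,
      forall_exists_index, and_imp]
    rintro _ s hs rfl _ t ht rfl hne
    have hst : s ≠ t := by rintro rfl; exact hne rfl
    exact ⟨hst, hW.ne_flipAt hs ht, (hW.ne_flipAt ht hs).symm,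
      fun h => hst (hW.flipAt_inj hs ht h)⟩
  · rw [Finset.card_image_of_injective _ fun _ _ h => congrArg Prod.fst h,
      ← Set.ncard_coe_finset, Finset.coe_filter]
    simp

end IsAdmissibleWinner

lemma exists_flipAt_acceptable_of_edgeCond {s s' : Fin n → Fin 2}
    (h : EdgeCond v γ s s' ∨ EdgeCond v γ s' s) :
    ∃ i, s' = flipAt s i ∧ Acceptable v γ s i ∧ Acceptable v γ s' i := by
  rcases h with ⟨i, rfl, -, -, hs, hs'⟩ | ⟨i, rfl, -, -, hs', hs⟩
  exacts [⟨i, rfl, hs, hs'⟩, ⟨i, (flipAt_flipAt s' i).symm, hs, hs'⟩]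

/-- A matched profile is won by the agent of its matching edge, an unmatched one by an agent
that is acceptable but unconstrained there. -/
lemma exists_isAdmissibleWinner_of_partner (R : (Fin n → Fin 2) → (Fin n → Fin 2) → Prop)
    (hsymm : ∀ t u, R t u → R u t) (hunique : ∀ t u u', R t u → R t u' → u = u')
    (hadj : ∀ t u, R t u → ∃ i, u = flipAt t i ∧ Acceptable v γ t i ∧ Acceptable v γ u i)
    (hcover : ∀ s, MustMatch v γ s → ∃ u, R s u) :
    ∃ W, IsAdmissibleWinner v γ W := by
  have hchoice : ∀ t, ∃ i, Acceptable v γ t i ∧ (∀ u, R t u → R t (flipAt t i)) ∧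
      (Constrained v t i → ∃ u, R t u) := by
    intro t
    by_cases ht : ∃ u, R t u
    · obtain ⟨u, hu⟩ := ht
      obtain ⟨i, rfl, hi, -⟩ := hadj t u hu
      exact ⟨i, hi, fun _ _ => hu, fun _ => ⟨_, hu⟩⟩
    · obtain ⟨i, hi, hfree⟩ : ∃ i, Acceptable v γ t i ∧ ¬Constrained v t i := by
        simpa [MustMatch] using mt (hcover t) ht
      exact ⟨i, hi, fun u hu => (ht ⟨u, hu⟩).elim, fun h => (hfree h).elim⟩
  choose W hacc hmatched hcovered using hchoice
  refine ⟨W, hacc, fun t ht => ?_⟩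
  obtain ⟨u, hu⟩ := hcovered t ht
  have htu := hmatched t u hu
  have hback := hmatched _ t (hsymm _ _ htu)
  have hflip := hunique _ _ _ (hsymm _ _ htu) hback
  exact (flipAt_right_injective _ ((flipAt_flipAt t (W t)).trans hflip)).symm

lemma exists_isAdmissibleWinner_of_matching {F : Finset ((Fin n → Fin 2) × (Fin n → Fin 2))}
    (hE : ∀ p ∈ F, EdgeCond v γ p.1 p.2 ∨ EdgeCond v γ p.2 p.1) (hF : VertexDisjoint F)
    (hcard : F.card = {s : Fin n → Fin 2 | MustMatch v γ s}.ncard) :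
    ∃ W, IsAdmissibleWinner v γ W := by
  classical
  refine exists_isAdmissibleWinner_of_partner (fun t u => (t, u) ∈ F ∨ (u, t) ∈ F)
    (fun _ _ => Or.symm) (fun _ _ _ => hF.partner_unique) (fun t u htu => ?_)
    (fun s hs => hF.exists_partner_of_card_le (S := Finset.univ.filter (MustMatch v γ)) ?_ ?_
      (by simpa using hs))
  · apply exists_flipAt_acceptable_of_edgeCond
    rcases htu with h | h
    exacts [hE _ h, (hE _ h).symm]
  · intro p hp
    rcases hE p hp with ⟨_, _, hM, _⟩ | ⟨_, _, hM, _⟩ <;> simp [hM]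
  · rw [hcard, ← Set.ncard_coe_finset, Finset.coe_filter]
    simp

end

/-- `k = 2`: there is a deterministic truthful allocation rule of ratio at
most `γ` iff the graph `G_γ` contains a matching of cardinality `|M_γ|`. -/
theorem stmt11 [NeZero n] (γ : ℝ) (hγ : 1 ≤ γ)
    (v : Fin n → (Fin n → Fin 2) → ℝ) (hv : ∀ i s, 0 < v i s) :
    (∃ x : Fin n → (Fin n → Fin 2) → ℝ, InT v x ∧ (∀ i s, x i s = 0 ∨ x i s = 1) ∧
      Finset.univ.sup' Finset.univ_nonempty
        (fun s : Fin n → Fin 2 => ∑ i, x i s / rho v i s) ≤ γ) ↔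
    (∃ F : Finset ((Fin n → Fin 2) × (Fin n → Fin 2)),
      (∀ p ∈ F, EdgeCond v γ p.1 p.2 ∨ EdgeCond v γ p.2 p.1) ∧
      (∀ p ∈ F, ∀ q ∈ F, p ≠ q →
        p.1 ≠ q.1 ∧ p.1 ≠ q.2 ∧ p.2 ≠ q.1 ∧ p.2 ≠ q.2) ∧
      F.card = {s : Fin n → Fin 2 | MustMatch v γ s}.ncard) := by
  rw [exists_deterministic_iff_exists_isAdmissibleWinner hv (by linarith)]
  exact ⟨fun ⟨_, hW⟩ => hW.exists_matching,
    fun ⟨_, hE, hF, hcard⟩ => exists_isAdmissibleWinner_of_matching hE hF hcard⟩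

end Stmt11
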